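/- Let μ ∈ (-1,0), p = -μ/(1+μ) and q = (2+μ)/(1+μ). Then p > 0 and the quantity G(x,h) = -x(1+μ)h^p (1 + x + xμ + (1+μ)h) / (2 + (1+μ)h)^q is a first integral of the ODE h(2+(1+μ)h)(1+2x(1+μ)+(1+μ)h) + x(-1 + x²(1+μ)² + 2(x + 1/(1+μ) + h) - (1+x+h+μ(x+h))²) h' = 0, i.e., dG/dx vanishes along any C¹ solution h(x) with h(x) > 0 and 2 + (1+μ)h(x) > 0 on an interval where x ≠ 0. -/

import Mathlib

noncomputable section

/-- `G(x,h) = -x(1+μ) h^p (1 + x + xμ + (1+μ)h) / (2 + (1+μ)h)^q`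
with `p = -μ/(1+μ)` and `q = (2+μ)/(1+μ)` (real powers). -/
def Gint (μ x h : ℝ) : ℝ :=
  -x * (1 + μ) * h ^ (-μ / (1 + μ)) * (1 + x + x * μ + (1 + μ) * h) /
    (2 + (1 + μ) * h) ^ ((2 + μ) / (1 + μ))

/-! Writing `G(x,h) = -(1+μ) x S (h^p / w^q)` with `S = 1 + (1+μ)(x+h)` and `w = 2 + (1+μ)h`,
the factor `h^p / w^q` has logarithmic derivative `(p/h - q(1+μ)/w) h'`. With the specific
exponents `p`, `q`, the total derivative of `G` along `h` is `-(1+μ) h^p/w^q` times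
`(ODE left-hand side)/(h w)`, hence zero along solutions. -/

theorem HasDerivAt.rpow_div_rpow {f g : ℝ → ℝ} {f' g' x : ℝ} (p q : ℝ)
    (hf : HasDerivAt f f' x) (hg : HasDerivAt g g' x) (hfx : 0 < f x) (hgx : 0 < g x) :
    HasDerivAt (fun t => f t ^ p / g t ^ q)
      (f x ^ p / g x ^ q * (p * f' / f x - q * g' / g x)) x := by
  have hfp := hf.rpow_const (p := p) (Or.inl hfx.ne')
  have hgq := hg.rpow_const (p := q) (Or.inl hgx.ne')
  refine (hfp.fun_div hgq (Real.rpow_pos_of_pos hgx q).ne').congr_deriv ?_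
  rw [Real.rpow_sub hfx, Real.rpow_sub hgx, Real.rpow_one, Real.rpow_one]
  field_simp

theorem Gint_eq_mul (μ x h : ℝ) :
    Gint μ x h = -(1 + μ) * (x * (1 + (1 + μ) * (x + h)) *
      (h ^ (-μ / (1 + μ)) / (2 + (1 + μ) * h) ^ ((2 + μ) / (1 + μ)))) := by
  unfold Gint
  ring

theorem Gint_deriv_cofactor_eq (μ x u v : ℝ) (ha : 1 + μ ≠ 0) (hu : u ≠ 0)
    (hw : 2 + (1 + μ) * u ≠ 0) :
    (1 + (1 + μ) * (x + u)) + x * ((1 + μ) * (1 + v)) +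
        x * (1 + (1 + μ) * (x + u)) *
          (-μ / (1 + μ) * v / u - (2 + μ) / (1 + μ) * ((1 + μ) * v) / (2 + (1 + μ) * u)) =
      (u * (2 + (1 + μ) * u) * (1 + 2 * x * (1 + μ) + (1 + μ) * u) +
        x * (-1 + x ^ 2 * (1 + μ) ^ 2 + 2 * (x + 1 / (1 + μ) + u) -
          (1 + x + u + μ * (x + u)) ^ 2) * v) / (u * (2 + (1 + μ) * u)) := by
  field_simp
  ring

/-- For `μ ∈ (-1,0)`, `p = -μ/(1+μ) > 0`, and `G` is a first integral of the ODE
`h(2+(1+μ)h)(1+2x(1+μ)+(1+μ)h)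
  + x(-1 + x²(1+μ)² + 2(x + 1/(1+μ) + h) - (1+x+h+μ(x+h))²) h' = 0`:
along any C¹ solution `h` with `h(x) > 0`, `2 + (1+μ)h(x) > 0` and `x ≠ 0`,
the derivative of `x ↦ G(x, h(x))` vanishes. -/
theorem first_integral (μ : ℝ) (hμ₁ : -1 < μ) (hμ₂ : μ < 0) :
    0 < -μ / (1 + μ) ∧
    ∀ (h : ℝ → ℝ) (x h'x : ℝ), x ≠ 0 → 0 < h x → 0 < 2 + (1 + μ) * h x →
      HasDerivAt h h'x x →
      h x * (2 + (1 + μ) * h x) * (1 + 2 * x * (1 + μ) + (1 + μ) * h x) +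
        x * (-1 + x ^ 2 * (1 + μ) ^ 2 + 2 * (x + 1 / (1 + μ) + h x) -
          (1 + x + h x + μ * (x + h x)) ^ 2) * h'x = 0 →
      HasDerivAt (fun t => Gint μ t (h t)) 0 x := by
  have ha : 0 < 1 + μ := by linarith
  refine ⟨div_pos (by linarith) ha, fun h x h'x _ hu hw hder hode => ?_⟩
  have hS : HasDerivAt (fun t => t * (1 + (1 + μ) * (t + h t)))
      (1 + (1 + μ) * (x + h x) + x * ((1 + μ) * (1 + h'x))) x := by
    simpa using (hasDerivAt_id x).fun_mul
      ((((hasDerivAt_id x).fun_add hder).const_mul (1 + μ)).const_add 1)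
  have hR := hder.rpow_div_rpow (-μ / (1 + μ)) ((2 + μ) / (1 + μ))
    ((hder.const_mul (1 + μ)).const_add 2) hu hw
  simp only [Gint_eq_mul]
  refine ((hS.fun_mul hR).const_mul (-(1 + μ))).congr_deriv ?_
  set R := h x ^ (-μ / (1 + μ)) / (2 + (1 + μ) * h x) ^ ((2 + μ) / (1 + μ))
  calc _ = -(1 + μ) * R * ((1 + (1 + μ) * (x + h x)) + x * ((1 + μ) * (1 + h'x)) +
        x * (1 + (1 + μ) * (x + h x)) * (-μ / (1 + μ) * h'x / h x -
          (2 + μ) / (1 + μ) * ((1 + μ) * h'x) / (2 + (1 + μ) * h x))) := by ring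
    _ = 0 := by
      rw [Gint_deriv_cofactor_eq μ x (h x) h'x ha.ne' hu.ne' hw.ne', hode, zero_div, mul_zero]
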